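/- arXiv:0911.5049 — 7 statements merged into one kernel-verified Lean document; each statement's English description precedes it below -/
import Mathlib

section
/- For n ≥ 1, define S(n) = sup over A in N(n,ℝ) of (inf over T in N(n,ℤ) of max(‖T·A‖_∞, ‖(T·A)⁻¹‖_∞)), where the sup and inf are taken in the extended nonnegative reals [0,∞]. Then S is monotone: for all natural numbers 1 ≤ n ≤ m, S(n) ≤ S(m). -/
open scoped ENNReal

/-- Entrywise maximum absolute value of a square real matrix. -/
noncomputable def maxAbs {m : Type*} [Fintype m] (Y : Matrix m m ℝ) : ℝ :=
  ⨆ i, ⨆ j, |Y i j|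

/-- The set `N(n, R)` of `n × n` lower-triangular matrices over `R` with all
diagonal entries equal to `1`. -/
def unipLower (n : ℕ) (R : Type*) [Zero R] [One R] :
    Set (Matrix (Fin n) (Fin n) R) :=
  {A | (∀ i j : Fin n, i < j → A i j = 0) ∧ ∀ i : Fin n, A i i = 1}

/-- Seysen's quantity
`S(n) = sup_{A ∈ N(n,ℝ)} inf_{T ∈ N(n,ℤ)} max(‖TA‖_∞, ‖(TA)⁻¹‖_∞)`,
computed in the extended nonnegative reals. -/
noncomputable def seysenS (n : ℕ) : ℝ≥0∞ :=
  ⨆ A ∈ unipLower n ℝ, ⨅ T ∈ unipLower n ℤ,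
    ENNReal.ofReal
      (max (maxAbs (T.map (fun x : ℤ => (x : ℝ)) * A))
           (maxAbs (T.map (fun x : ℤ => (x : ℝ)) * A)⁻¹))

/-!
Embed `A ∈ N(n,ℝ)` as `diag(A, 1) ∈ N(m,ℝ)`. For `T ∈ N(m,ℤ)` with leading `n × n` block `T₀`,
lower triangularity makes the leading block of `T · diag(A, 1)` equal to `T₀ A`, and the leading
block of its inverse equal to `(T₀ A)⁻¹`. Entries of a block are entries of the whole matrix, so
`T₀` does at least as well for `A` as `T` does for `diag(A, 1)`.
-/

open Matrix

section MaxAbs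

variable {ι κ : Type*} [Fintype ι] [Fintype κ]

lemma abs_le_maxAbs (Y : Matrix κ κ ℝ) (i j : κ) : |Y i j| ≤ maxAbs Y :=
  (le_ciSup (Set.finite_range _).bddAbove j).trans
    (le_ciSup (f := fun i => ⨆ j, |Y i j|) (Set.finite_range _).bddAbove i)

lemma maxAbs_nonneg (Y : Matrix κ κ ℝ) : 0 ≤ maxAbs Y :=
  Real.iSup_nonneg fun _ => Real.iSup_nonneg fun _ => abs_nonneg _

lemma maxAbs_submatrix_le (Y : Matrix κ κ ℝ) (e : ι → κ) :
    maxAbs (Y.submatrix e e) ≤ maxAbs Y :=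
  Real.iSup_le (fun i => Real.iSup_le (fun j => abs_le_maxAbs Y (e i) (e j)) (maxAbs_nonneg Y))
    (maxAbs_nonneg Y)

noncomputable def maxAbsWithInv [DecidableEq κ] (Y : Matrix κ κ ℝ) : ℝ :=
  max (maxAbs Y) (maxAbs Y⁻¹)

end MaxAbs

section UnipLower

variable {n m : ℕ} {R : Type*}

lemma isLowerTriangular_of_mem_unipLower [Zero R] [One R] {A : Matrix (Fin n) (Fin n) R}
    (hA : A ∈ unipLower n R) : A.IsLowerTriangular :=
  fun _ _ h => hA.1 _ _ h

lemma det_eq_one_of_mem_unipLower [CommRing R] {A : Matrix (Fin n) (Fin n) R}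
    (hA : A ∈ unipLower n R) : A.det = 1 := by
  rw [det_of_isLowerTriangular A (isLowerTriangular_of_mem_unipLower hA)]
  simp [hA.2]

lemma mul_mem_unipLower [Semiring R] {A B : Matrix (Fin n) (Fin n) R}
    (hA : A ∈ unipLower n R) (hB : B ∈ unipLower n R) : A * B ∈ unipLower n R := by
  refine ⟨fun i j hij => (isLowerTriangular_of_mem_unipLower hA).mul
    (isLowerTriangular_of_mem_unipLower hB) hij, fun i => ?_⟩
  rw [mul_apply, Finset.sum_eq_single i (fun k _ hk => ?_) (by simp), hA.2, hB.2, one_mul]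
  rcases lt_or_gt_of_ne hk with hk | hk
  · exact mul_eq_zero_of_right _ (hB.1 _ _ hk)
  · exact mul_eq_zero_of_left (hA.1 _ _ hk) _

lemma map_mem_unipLower [Zero R] [One R] {S : Type*} [Zero S] [One S] {f : R → S}
    (hf₀ : f 0 = 0) (hf₁ : f 1 = 1) {A : Matrix (Fin n) (Fin n) R} (hA : A ∈ unipLower n R) :
    A.map f ∈ unipLower n S :=
  ⟨fun i j hij => by simp [hA.1 i j hij, hf₀], fun i => by simp [hA.2 i, hf₁]⟩

lemma submatrix_mem_unipLower [Zero R] [One R] {e : Fin n → Fin m} (he : StrictMono e)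
    {A : Matrix (Fin m) (Fin m) R} (hA : A ∈ unipLower m R) :
    A.submatrix e e ∈ unipLower n R :=
  ⟨fun _ _ hij => hA.1 _ _ (he hij), fun i => hA.2 (e i)⟩

end UnipLower

section Block

variable {n m : ℕ} {R : Type*}

/-- The `m × m` block-diagonal matrix `diag(A, 1)`, for `n ≤ m`. -/
def extendByOne [Zero R] [One R] (m : ℕ) (A : Matrix (Fin n) (Fin n) R) :
    Matrix (Fin m) (Fin m) R :=
  fun i j => if hij : (i : ℕ) < n ∧ (j : ℕ) < n then A ⟨i, hij.1⟩ ⟨j, hij.2⟩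
    else (1 : Matrix (Fin m) (Fin m) R) i j

lemma extendByOne_mem_unipLower [Zero R] [One R] {A : Matrix (Fin n) (Fin n) R}
    (hA : A ∈ unipLower n R) : extendByOne m A ∈ unipLower m R := by
  refine ⟨fun i j hij => ?_, fun i => ?_⟩
  · unfold extendByOne
    split_ifs
    · exact hA.1 _ _ hij
    · exact one_apply_ne hij.ne
  · unfold extendByOne
    split_ifs
    · exact hA.2 _
    · exact one_apply_eq i

lemma submatrix_castLE_extendByOne [Zero R] [One R] (h : n ≤ m) (A : Matrix (Fin n) (Fin n) R) :
    (extendByOne m A).submatrix (Fin.castLE h) (Fin.castLE h) = A := by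
  ext i j
  simp [extendByOne]

lemma submatrix_castLE_mul_of_isLowerTriangular [NonUnitalNonAssocSemiring R] (h : n ≤ m)
    {B : Matrix (Fin m) (Fin m) R} (hB : B.IsLowerTriangular) (C : Matrix (Fin m) (Fin m) R) :
    (B * C).submatrix (Fin.castLE h) (Fin.castLE h) =
      B.submatrix (Fin.castLE h) (Fin.castLE h) * C.submatrix (Fin.castLE h) (Fin.castLE h) := by
  obtain ⟨k, rfl⟩ := Nat.exists_eq_add_of_le h
  ext i j
  have hout : ∀ l : Fin k, B (Fin.castLE h i) (Fin.natAdd n l) = 0 := fun l =>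
    hB (Fin.lt_def.2 (by simp; omega) : Fin.castLE h i < Fin.natAdd n l)
  simp only [submatrix_apply, mul_apply, Fin.sum_univ_add, hout, zero_mul,
    Finset.sum_const_zero, add_zero]
  rfl

lemma inv_submatrix_castLE_of_isLowerTriangular [CommRing R] (h : n ≤ m)
    {B : Matrix (Fin m) (Fin m) R} (hB : B.IsLowerTriangular) (hdet : IsUnit B.det) :
    (B.submatrix (Fin.castLE h) (Fin.castLE h))⁻¹ = B⁻¹.submatrix (Fin.castLE h) (Fin.castLE h) :=
  inv_eq_right_inv <| by
    rw [← submatrix_castLE_mul_of_isLowerTriangular h hB, mul_nonsing_inv B hdet,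
      submatrix_one (Fin.castLE h) (Fin.castLE_injective h)]

lemma maxAbsWithInv_submatrix_castLE_le (h : n ≤ m) {B : Matrix (Fin m) (Fin m) ℝ}
    (hB : B.IsLowerTriangular) (hdet : IsUnit B.det) :
    maxAbsWithInv (B.submatrix (Fin.castLE h) (Fin.castLE h)) ≤ maxAbsWithInv B := by
  rw [maxAbsWithInv, maxAbsWithInv, inv_submatrix_castLE_of_isLowerTriangular h hB hdet]
  exact max_le_max (maxAbs_submatrix_le B _) (maxAbs_submatrix_le B⁻¹ _)

end Block

theorem stmt_1_general (n m : ℕ) (hnm : n ≤ m) :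
    seysenS n ≤ seysenS m := by
  refine iSup₂_le fun A hA =>
    le_iSup₂_of_le (extendByOne m A) (extendByOne_mem_unipLower hA) (le_iInf₂ fun T hT => ?_)
  set e := Fin.castLE hnm
  set B := T.map (fun x : ℤ => (x : ℝ)) * extendByOne m A
  have hTℝ := map_mem_unipLower (f := fun x : ℤ => (x : ℝ)) Int.cast_zero Int.cast_one hT
  have hB : B ∈ unipLower m ℝ := mul_mem_unipLower hTℝ (extendByOne_mem_unipLower hA)
  have hrestrict : (T.submatrix e e).map (fun x : ℤ => (x : ℝ)) * A = B.submatrix e e := by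
    rw [submatrix_castLE_mul_of_isLowerTriangular hnm (isLowerTriangular_of_mem_unipLower hTℝ),
      submatrix_castLE_extendByOne]
    rfl
  refine iInf₂_le_of_le _ (submatrix_mem_unipLower (Fin.strictMono_castLE hnm) hT)
    (ENNReal.ofReal_le_ofReal ?_)
  change maxAbsWithInv _ ≤ maxAbsWithInv B
  rw [hrestrict]
  exact maxAbsWithInv_submatrix_castLE_le hnm (isLowerTriangular_of_mem_unipLower hB)
    (by rw [det_eq_one_of_mem_unipLower hB]; exact isUnit_one)

/-- The function `S` is monotone: for `1 ≤ n ≤ m`, `S(n) ≤ S(m)`. -/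
theorem stmt_1 (n m : ℕ) (hn : 1 ≤ n) (hnm : n ≤ m) :
    seysenS n ≤ seysenS m :=
  stmt_1_general n m hnm
end

section
/- Let f : ℕ → ℝ be a function satisfying: (i) f(n) ≥ 0 for all n ≥ 1; (ii) f is monotone, i.e. f(n) ≤ f(m) whenever 1 ≤ n ≤ m; (iii) f(1) = 1; and (iv) f(2n) ≤ f(n) · max(1, n/2) for all n ≥ 1. Then for all n ≥ 1, f(n) ≤ exp((ln n)² / (2 ln 2)). -/
/-!
Iterating the doubling inequality from `f 1 = 1` gives `f (2 ^ (k + 1)) ≤ 2 ^ C(k, 2)`, since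
passing from `2 ^ (k + 1)` to `2 ^ (k + 2)` costs a factor `2 ^ k`. For `2 ^ m ≤ n < 2 ^ (m + 1)`,
monotonicity then bounds `f n` by `2 ^ C(m, 2) ≤ 2 ^ (m² / 2)`, and `m ≤ log₂ n`.
-/

open Real

theorem le_two_pow_choose_two_of_doubling {f : ℕ → ℝ} (hone : f 1 = 1)
    (hdouble : ∀ n : ℕ, 1 ≤ n → f (2 * n) ≤ f n * max 1 ((n : ℝ) / 2)) (k : ℕ) :
    f (2 ^ (k + 1)) ≤ 2 ^ k.choose 2 := by
  induction k with
  | zero =>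
    have h := hdouble 1 le_rfl
    norm_num [hone] at h
    simpa using h
  | succ k ih =>
    have hmax : max (1 : ℝ) (((2 ^ (k + 1) : ℕ) : ℝ) / 2) = 2 ^ k := by
      rw [Nat.cast_pow, Nat.cast_ofNat, pow_succ, mul_div_cancel_right₀ _ two_ne_zero]
      exact max_eq_right (one_le_pow₀ one_le_two)
    calc f (2 ^ (k + 1 + 1)) = f (2 * 2 ^ (k + 1)) := by rw [pow_succ' 2 (k + 1)]
      _ ≤ f (2 ^ (k + 1)) * 2 ^ k := hmax ▸ hdouble _ Nat.one_le_two_pow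
      _ ≤ 2 ^ k.choose 2 * 2 ^ k := by gcongr
      _ = 2 ^ (k + 1).choose 2 := by
        rw [Nat.choose_succ_succ', Nat.choose_one_right, pow_add, mul_comm]

theorem two_pow_choose_two_le_exp {m : ℕ} {x : ℝ} (hx : 2 ^ m ≤ x) :
    (2 : ℝ) ^ m.choose 2 ≤ exp (log x ^ 2 / (2 * log 2)) := by
  have hlog2 : 0 < log 2 := log_pos one_lt_two
  have hm_log : m * log 2 ≤ log x := by
    rw [← log_pow]
    exact log_le_log (by positivity) hx
  have hchoose : (m.choose 2 : ℝ) ≤ m ^ 2 / 2 := by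
    simpa using Nat.choose_le_pow_div (α := ℝ) 2 m
  calc (2 : ℝ) ^ m.choose 2 = exp (m.choose 2 * log 2) := by
        rw [← log_pow, exp_log (by positivity)]
    _ ≤ exp ((m * log 2) ^ 2 / (2 * log 2)) := by
        gcongr exp ?_
        calc (m.choose 2 : ℝ) * log 2 ≤ m ^ 2 / 2 * log 2 := by gcongr
          _ = (m * log 2) ^ 2 / (2 * log 2) := by field_simp
    _ ≤ exp (log x ^ 2 / (2 * log 2)) := by gcongr

theorem stmt_2_general (f : ℕ → ℝ)
    (hmono : ∀ n m : ℕ, 1 ≤ n → n ≤ m → f n ≤ f m)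
    (hone : f 1 = 1)
    (hdouble : ∀ n : ℕ, 1 ≤ n → f (2 * n) ≤ f n * max 1 ((n : ℝ) / 2)) :
    ∀ n : ℕ, 1 ≤ n → f n ≤ Real.exp ((Real.log n) ^ 2 / (2 * Real.log 2)) := by
  intro n hn
  set m := Nat.log 2 n
  have hlower : 2 ^ m ≤ n := Nat.pow_log_le_self 2 (by omega)
  have hupper : n ≤ 2 ^ (m + 1) := (Nat.lt_pow_succ_log_self one_lt_two n).le
  calc f n ≤ f (2 ^ (m + 1)) := hmono _ _ hn hupper
    _ ≤ 2 ^ m.choose 2 := le_two_pow_choose_two_of_doubling hone hdouble m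
    _ ≤ exp (log n ^ 2 / (2 * log 2)) := two_pow_choose_two_le_exp (by exact_mod_cast hlower)

/-- If `f : ℕ → ℝ` is nonnegative on positive integers, monotone there,
satisfies `f 1 = 1` and the doubling inequality `f (2n) ≤ f n * max 1 (n/2)`,
then `f n ≤ exp ((ln n)² / (2 ln 2))` for all `n ≥ 1`. -/
theorem stmt_2 (f : ℕ → ℝ)
    (hnonneg : ∀ n : ℕ, 1 ≤ n → 0 ≤ f n)
    (hmono : ∀ n m : ℕ, 1 ≤ n → n ≤ m → f n ≤ f m)
    (hone : f 1 = 1)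
    (hdouble : ∀ n : ℕ, 1 ≤ n → f (2 * n) ≤ f n * max 1 ((n : ℝ) / 2)) :
    ∀ n : ℕ, 1 ≤ n → f n ≤ Real.exp ((Real.log n) ^ 2 / (2 * Real.log 2)) :=
  stmt_2_general f hmono hone hdouble
end

section
/- Let B be an invertible n×n real matrix with rows b_1, …, b_n, all nonzero, write V = D⁻¹·B with D = diag(‖b_1‖, …, ‖b_n‖), and set U = V·Vᵗ. Let λ_1, …, λ_n be the (real, positive) eigenvalues of the symmetric positive definite matrix U. Then S(B) = Σ_{i=1}^n 1/λ_i. -/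
/-!
Since `D` is diagonal, `V⁻¹ = B⁻¹ D` is `B⁻¹` with its `i`-th column scaled by `‖b_i‖`, so
`S(B)` is the squared Frobenius norm of `V⁻¹`, which is `tr ((V Vᵀ)⁻¹) = tr U⁻¹`. Diagonalising
`U` by an orthogonal matrix shows that this trace is `∑ i, 1 / λ_i`.
-/

open Matrix

/-- The Seysen measure `S(B) = ∑ i, ‖b_i‖² ‖b_i*‖²` of a basis given by the rows
of `B`, where the dual basis `B* = (B⁻¹)ᵗ` has rows `b_i* = (B⁻¹ · i)`. -/
noncomputable def seysen {n : ℕ} (B : Matrix (Fin n) (Fin n) ℝ) : ℝ :=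
  ∑ i, (∑ j, (B i j) ^ 2) * (∑ j, (B⁻¹ j i) ^ 2)

namespace Matrix

variable {n : Type*} [Fintype n] [DecidableEq n]

theorem trace_inv_mul_transpose {R : Type*} [CommRing R] (V : Matrix n n R) :
    (V * Vᵀ)⁻¹.trace = ∑ i, ∑ j, V⁻¹ j i ^ 2 := by
  rw [mul_inv_rev, ← transpose_nonsing_inv, trace]
  simp only [diag_apply, mul_apply, transpose_apply, sq]

section RCLike

variable {𝕜 : Type*} [RCLike 𝕜]

theorem trace_conjStarAlgAut (u : unitary (Matrix n n 𝕜)) (M : Matrix n n 𝕜) :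
    (Unitary.conjStarAlgAut 𝕜 _ u M).trace = M.trace := by
  rw [Unitary.conjStarAlgAut_apply, trace_mul_cycle, Unitary.coe_star_mul_self, one_mul]

theorem IsHermitian.eigenvalues_ne_zero {A : Matrix n n 𝕜} (hA : A.IsHermitian)
    (hdet : IsUnit A.det) (i : n) : hA.eigenvalues i ≠ 0 := by
  rw [hA.det_eq_prod_eigenvalues, isUnit_iff_ne_zero, Finset.prod_ne_zero_iff] at hdet
  exact_mod_cast hdet i (Finset.mem_univ i)

theorem IsHermitian.trace_inv {A : Matrix n n 𝕜} (hA : A.IsHermitian) (hdet : IsUnit A.det) :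
    A⁻¹.trace = ∑ i, ((hA.eigenvalues i : 𝕜))⁻¹ := by
  set conj := Unitary.conjStarAlgAut 𝕜 _ hA.eigenvectorUnitary
  have hinv : A⁻¹ = conj (diagonal fun i ↦ ((hA.eigenvalues i : 𝕜))⁻¹) := by
    refine inv_eq_right_inv ?_
    have hdiag : conj (diagonal (RCLike.ofReal ∘ hA.eigenvalues)) *
        conj (diagonal fun i ↦ ((hA.eigenvalues i : 𝕜))⁻¹) = 1 := by
      rw [← map_mul, diagonal_mul_diagonal, ← map_one conj, ← diagonal_one]
      congr 2
      ext i
      exact mul_inv_cancel₀ (RCLike.ofReal_ne_zero.mpr (hA.eigenvalues_ne_zero hdet i))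
    rwa [← hA.spectral_theorem] at hdiag
  rw [hinv, trace_conjStarAlgAut, trace_diagonal]

end RCLike

end Matrix

theorem seysen_eq_sum_sq_inv_mul_diagonal_rowNorm {n : ℕ} (B : Matrix (Fin n) (Fin n) ℝ) :
    seysen B =
      ∑ i, ∑ j, (B⁻¹ * diagonal fun i ↦ Real.sqrt (∑ j, B i j ^ 2)) j i ^ 2 := by
  refine Finset.sum_congr rfl fun i _ ↦ ?_
  simp only [mul_diagonal, mul_pow, Real.sq_sqrt (Finset.sum_nonneg fun j _ ↦ sq_nonneg (B i j)),
    ← Finset.sum_mul]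
  ring

theorem isUnit_det_diagonal_rowNorm {n : ℕ} {B : Matrix (Fin n) (Fin n) ℝ}
    (hrows : ∀ i, B i ≠ 0) : IsUnit (diagonal fun i ↦ Real.sqrt (∑ j, B i j ^ 2)).det := by
  rw [det_diagonal, isUnit_iff_ne_zero, Finset.prod_ne_zero_iff]
  intro i _
  obtain ⟨j, hj⟩ := Function.ne_iff.mp (hrows i)
  exact (Real.sqrt_pos.mpr (Finset.sum_pos' (fun k _ ↦ sq_nonneg (B i k))
    ⟨j, Finset.mem_univ j, sq_pos_of_ne_zero hj⟩)).ne'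

/-- If `V = D⁻¹·B` with `D = diag(‖b_1‖, …, ‖b_n‖)`, `U = V·Vᵗ` is the
(symmetric positive definite) matrix of pairwise cosines, and
`λ_1, …, λ_n` are its eigenvalues, then `S(B) = ∑ i, 1/λ_i`. -/
theorem stmt_9 (n : ℕ) (B : Matrix (Fin n) (Fin n) ℝ)
    (hB : IsUnit B.det) (hrows : ∀ i : Fin n, B i ≠ 0)
    (D V U : Matrix (Fin n) (Fin n) ℝ)
    (hD : D = Matrix.diagonal fun i => Real.sqrt (∑ j, (B i j) ^ 2))
    (hV : V = D⁻¹ * B)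
    (hU : U = V * Vᵀ)
    (hHerm : U.IsHermitian) :
    seysen B = ∑ i, 1 / hHerm.eigenvalues i := by
  have hDdet : IsUnit D.det := hD ▸ isUnit_det_diagonal_rowNorm hrows
  have hVinv : V⁻¹ = B⁻¹ * D := by rw [hV, Matrix.mul_inv_rev, nonsing_inv_nonsing_inv D hDdet]
  have hVdet : IsUnit V.det := by
    rw [hV, det_mul]
    exact (isUnit_nonsing_inv_det D hDdet).mul hB
  have hUdet : IsUnit U.det := by
    rw [hU, det_mul, det_transpose]
    exact hVdet.mul hVdet
  calc seysen B = ∑ i, ∑ j, V⁻¹ j i ^ 2 := by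
        rw [seysen_eq_sum_sq_inv_mul_diagonal_rowNorm, hVinv, hD]
    _ = U⁻¹.trace := by rw [hU, trace_inv_mul_transpose]
    _ = ∑ i, 1 / hHerm.eigenvalues i := by simp [hHerm.trace_inv hUdet]
end

section
/- Let n ≥ 1 and let B be an invertible n×n real matrix with rows b_1, …, b_n, regarded as a basis of the lattice L with volume Vol L = |det B|. Then ∏_{i=1}^n ‖b_i‖ ≤ (S(B)/n)^{n/2} · Vol L. -/
open Finset

theorem Real.prod_sqrt_le_arith_mean_rpow {ι : Type*} [Fintype ι] (z : ι → ℝ)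
    (hz : ∀ i, 0 ≤ z i) :
    ∏ i, √(z i) ≤ ((∑ i, z i) / Fintype.card ι) ^ ((Fintype.card ι : ℝ) / 2) := by
  rcases isEmpty_or_nonempty ι with hι | hι
  · simp
  have hcard : (0 : ℝ) < Fintype.card ι := by exact_mod_cast Fintype.card_pos
  have hprod : 0 ≤ ∏ i, z i := prod_nonneg fun i _ => hz i
  have amgm := Real.geom_mean_le_arith_mean univ (fun _ => 1) z (by simp) (by simpa using hcard)
    fun i _ => hz i
  simp only [Real.rpow_one, one_mul, sum_const, card_univ, nsmul_eq_mul, mul_one] at amgm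
  calc ∏ i, √(z i) = ((∏ i, z i) ^ (Fintype.card ι : ℝ)⁻¹) ^ ((Fintype.card ι : ℝ) / 2) := by
        rw [← Real.rpow_mul hprod, ← Real.sqrt_prod _ fun i _ => hz i, Real.sqrt_eq_rpow]
        field_simp
    _ ≤ ((∑ i, z i) / Fintype.card ι) ^ ((Fintype.card ι : ℝ) / 2) := by gcongr

namespace Matrix

open scoped EuclideanSpace

theorem abs_det_le_prod_sqrt_sum_sq_row {n : ℕ} (M : Matrix (Fin n) (Fin n) ℝ) :
    |M.det| ≤ ∏ i, √(∑ j, M i j ^ 2) := by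
  let e := EuclideanSpace.basisFun (Fin n) ℝ
  let v : Fin n → EuclideanSpace ℝ (Fin n) := fun i => WithLp.toLp 2 (M i)
  have hdet : e.toBasis.det v = M.det := by
    rw [Module.Basis.det_apply, ← det_transpose]
    congr 1
  have hadamard := e.toBasis.orientation.abs_volumeForm_apply_le v
  rw [e.toBasis.orientation.volumeForm_robust' e, hdet] at hadamard
  simpa [v, EuclideanSpace.norm_eq, sq_abs] using hadamard

theorem inv_abs_det_le_prod_sqrt_sum_sq_col_inv {n : ℕ} (M : Matrix (Fin n) (Fin n) ℝ) :
    |M.det|⁻¹ ≤ ∏ i, √(∑ j, M⁻¹ j i ^ 2) := by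
  simpa [det_nonsing_inv, Ring.inverse_eq_inv'] using
    abs_det_le_prod_sqrt_sum_sq_row M⁻¹.transpose

end Matrix

theorem stmt_10_general (n : ℕ) (B : Matrix (Fin n) (Fin n) ℝ)
    (hB : IsUnit B.det) :
    ∏ i, Real.sqrt (∑ j, (B i j) ^ 2) ≤
      (seysen B / n) ^ ((n : ℝ) / 2) * |B.det| := by
  have hdual : 1 ≤ |B.det| * ∏ i, √(∑ j, B⁻¹ j i ^ 2) :=
    (inv_le_iff_one_le_mul₀' (abs_pos.mpr hB.ne_zero)).mp
      B.inv_abs_det_le_prod_sqrt_sum_sq_col_inv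
  calc ∏ i, √(∑ j, B i j ^ 2)
      ≤ (∏ i, √(∑ j, B i j ^ 2)) * (|B.det| * ∏ i, √(∑ j, B⁻¹ j i ^ 2)) :=
        le_mul_of_one_le_right (by positivity) hdual
    _ = (∏ i, √((∑ j, B i j ^ 2) * ∑ j, B⁻¹ j i ^ 2)) * |B.det| := by
        simp_rw [Real.sqrt_mul (sum_nonneg fun j _ => sq_nonneg (B _ j)), prod_mul_distrib]
        ring
    _ ≤ (seysen B / n) ^ ((n : ℝ) / 2) * |B.det| := by
        gcongr
        simpa [seysen] using Real.prod_sqrt_le_arith_mean_rpow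
          (fun i => (∑ j, B i j ^ 2) * ∑ j, B⁻¹ j i ^ 2) fun i => by positivity

/-- For an invertible `B` (rows `b_i` a basis of a lattice of volume `|det B|`),
`∏ i, ‖b_i‖ ≤ (S(B)/n)^(n/2) · |det B|`. -/
theorem stmt_10 (n : ℕ) (hn : 1 ≤ n) (B : Matrix (Fin n) (Fin n) ℝ)
    (hB : IsUnit B.det) :
    ∏ i, Real.sqrt (∑ j, (B i j) ^ 2) ≤
      (seysen B / n) ^ ((n : ℝ) / 2) * |B.det| :=
  stmt_10_general n B hB
end

section
/- Let n ≥ 2 and let x_1, …, x_n be positive real numbers. Let a = (1/n)·Σ_{i=1}^n x_i be their arithmetic mean, g = (∏_{i=1}^n x_i)^{1/n} their geometric mean, and h = n/(Σ_{i=1}^n 1/x_i) their harmonic mean, and set α = 1/n. Then g ≤ ((a − h(1−2α) − √((a−h)(a−h(1−2α)²)))/(2α))^α · ((a + h(1−2α) + √((a−h)(a−h(1−2α)²)))/(2(1−α)))^{1−α}. -/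
/-! The bound is the geometric mean of the configuration with one entry `P` and `n - 1` entries
`Q ≥ P` having the same arithmetic mean `a` and harmonic mean `h` as `x`. Cauchy–Schwarz on the
other `n - 1` entries forces every `x i ≥ P`. After scaling `Q` to `1`, there is a bound
`log y ≤ A * (y - 1) + B * (y⁻¹ - 1)`, valid for `y ≥ P / Q` and tight at `P / Q` and at `1`;
summed over the `x i / Q`, its right-hand side only sees `∑ x i` and `∑ (x i)⁻¹`, so it is the same
as for the extremal configuration, giving `∑ log (x i) ≤ log P + (n - 1) * log Q`. -/

open Real Finset

section LogGap

open Set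

-- `logGap S y ≤ 0` is the bound `log y ≤ ((y - 1) - S * (y⁻¹ - 1)) / (1 + S)`, tight at `y = 1`.
noncomputable def logGap (S y : ℝ) : ℝ := (1 + S) * log y - (y - 1) + S * (y⁻¹ - 1)

lemma logGap_one (S : ℝ) : logGap S 1 = 0 := by simp [logGap]

lemma hasDerivAt_logGap (S : ℝ) {y : ℝ} (hy : 0 < y) :
    HasDerivAt (logGap S) (-((y - 1) * (y - S)) / y ^ 2) y := by
  have h : HasDerivAt (logGap S) ((1 + S) * y⁻¹ - 1 + S * -(y ^ 2)⁻¹) y :=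
    (((hasDerivAt_log hy.ne').const_mul (1 + S)).sub ((hasDerivAt_id y).sub_const 1)).add
      (((hasDerivAt_inv hy.ne').sub_const 1).const_mul S)
  convert h using 1
  field_simp
  ring

lemma antitoneOn_logGap {S : ℝ} {D : Set ℝ} (hD : Convex ℝ D) (hD0 : D ⊆ Ioi 0)
    (hsign : ∀ y ∈ D, 0 ≤ (y - 1) * (y - S)) : AntitoneOn (logGap S) D :=
  antitoneOn_of_hasDerivWithinAt_nonpos hD
    (fun _ hy ↦ (hasDerivAt_logGap S (hD0 hy)).continuousAt.continuousWithinAt)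
    (fun _ hy ↦ (hasDerivAt_logGap S (hD0 (interior_subset hy))).hasDerivWithinAt)
    (fun y hy ↦ div_nonpos_of_nonpos_of_nonneg (neg_nonpos.2 (hsign y (interior_subset hy)))
      (sq_nonneg y))

lemma monotoneOn_logGap {S : ℝ} {D : Set ℝ} (hD : Convex ℝ D) (hD0 : D ⊆ Ioi 0)
    (hsign : ∀ y ∈ D, (y - 1) * (y - S) ≤ 0) : MonotoneOn (logGap S) D :=
  monotoneOn_of_hasDerivWithinAt_nonneg hD
    (fun _ hy ↦ (hasDerivAt_logGap S (hD0 hy)).continuousAt.continuousWithinAt)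
    (fun _ hy ↦ (hasDerivAt_logGap S (hD0 (interior_subset hy))).hasDerivWithinAt)
    (fun y hy ↦ div_nonneg (neg_nonneg.2 (hsign y (interior_subset hy))) (sq_nonneg y))

lemma logGap_nonpos {S y : ℝ} (hS : 0 < S) (hS1 : S ≤ 1) (hy : S ≤ y) : logGap S y ≤ 0 := by
  rw [← logGap_one S]
  rcases le_total y 1 with hy1 | hy1
  · refine monotoneOn_logGap (convex_Icc S 1) (fun z hz ↦ hS.trans_le hz.1) ?_
      ⟨hy, hy1⟩ ⟨hS1, le_rfl⟩ hy1
    intro z hz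
    exact mul_nonpos_of_nonpos_of_nonneg (by linarith [hz.2]) (by linarith [hz.1])
  · refine antitoneOn_logGap (convex_Ici 1) (fun _ hz ↦ mem_Ioi.2 (one_pos.trans_le hz)) ?_
      self_mem_Ici hy1 hy1
    intro z hz
    exact mul_nonneg (by linarith [mem_Ici.1 hz]) (by linarith [mem_Ici.1 hz])

lemma logGap_le {S p y : ℝ} (hp : 0 < p) (hS1 : S ≤ 1) (hpy : p ≤ y) (hyS : y ≤ S) :
    logGap S y ≤ logGap S p := by
  refine antitoneOn_logGap (convex_Icc p S) (fun z hz ↦ hp.trans_le hz.1) ?_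
    ⟨le_rfl, hpy.trans hyS⟩ ⟨hpy, hyS⟩ hpy
  intro z hz
  exact mul_nonneg_of_nonpos_of_nonpos (by linarith [hz.2]) (by linarith [hz.2])

lemma exists_logGap_eq_zero {p : ℝ} (hp : 0 < p) (hp1 : p ≤ 1) :
    ∃ S ∈ Icc p 1, logGap S p = 0 := by
  have hlow : logGap p p ≤ 0 := logGap_nonpos hp hp1 le_rfl
  have hhigh : 0 ≤ logGap 1 p := logGap_one 1 ▸ logGap_le hp le_rfl hp1 le_rfl
  have hcont : ContinuousOn (fun S ↦ logGap S p) (Icc p 1) := by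
    unfold logGap; fun_prop
  exact intermediate_value_Icc hp1 hcont ⟨hlow, hhigh⟩

lemma logGap_nonpos_of_eq_zero {S p y : ℝ} (hp : 0 < p) (hS : S ∈ Icc p 1)
    (hSp : logGap S p = 0) (hpy : p ≤ y) : logGap S y ≤ 0 := by
  rcases le_total y S with hyS | hSy
  · exact hSp ▸ logGap_le hp hS.2 hpy hyS
  · exact logGap_nonpos (hp.trans_le hS.1) hS.2 hSy

theorem sum_log_le_log_of_sum_eq {ι : Type*} (s : Finset ι) (y : ι → ℝ) {p : ℝ} (hp : 0 < p)
    (hp1 : p ≤ 1) (hy : ∀ i ∈ s, p ≤ y i) (hsum : ∑ i ∈ s, y i = p + (#s - 1))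
    (hinv : ∑ i ∈ s, (y i)⁻¹ = p⁻¹ + (#s - 1)) :
    ∑ i ∈ s, log (y i) ≤ log p := by
  obtain ⟨S, hS, hSp⟩ := exists_logGap_eq_zero hp hp1
  have hgap : ∑ i ∈ s, logGap S (y i) ≤ 0 :=
    sum_nonpos fun i hi ↦ logGap_nonpos_of_eq_zero hp hS hSp (hy i hi)
  have hexpand : ∑ i ∈ s, logGap S (y i) = (1 + S) * (∑ i ∈ s, log (y i) - log p) + logGap S p := by
    simp only [logGap, sum_add_distrib, sum_sub_distrib, ← mul_sum, sum_const, hsum, hinv,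
      nsmul_eq_mul]
    ring
  nlinarith [hS.1]

theorem sum_log_le_of_sum_eq {ι : Type*} (s : Finset ι) (y : ι → ℝ) {p q : ℝ} (hp : 0 < p)
    (hpq : p ≤ q) (hy : ∀ i ∈ s, p ≤ y i) (hsum : ∑ i ∈ s, y i = p + (#s - 1) * q)
    (hinv : ∑ i ∈ s, (y i)⁻¹ = p⁻¹ + (#s - 1) * q⁻¹) :
    ∑ i ∈ s, log (y i) ≤ log p + (#s - 1) * log q := by
  have hq : 0 < q := hp.trans_le hpq
  have hy0 : ∀ i ∈ s, y i ≠ 0 := fun i hi ↦ (hp.trans_le (hy i hi)).ne'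
  have key := sum_log_le_log_of_sum_eq s (fun i ↦ y i / q) (div_pos hp hq)
    ((div_le_one hq).2 hpq) (fun i hi ↦ div_le_div_of_nonneg_right (hy i hi) hq.le)
    (by rw [← sum_div, hsum]; field_simp)
    (by simp_rw [inv_div, div_eq_mul_inv q, ← mul_sum, hinv]; field_simp)
  rw [sum_congr rfl fun i hi ↦ log_div (hy0 i hi) hq.ne', sum_sub_distrib, sum_const,
    nsmul_eq_mul, log_div hp.ne' hq.ne'] at key
  linarith

end LogGap

-- With `α = 1 / n`, one entry `extremalLow α a h` and `n - 1` entries `extremalHigh α a h` have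
-- arithmetic mean `a` and harmonic mean `h`.
noncomputable def extremalDiscr (α a h : ℝ) : ℝ := (a - h) * (a - h * (1 - 2 * α) ^ 2)

noncomputable def extremalLow (α a h : ℝ) : ℝ :=
  (a - h * (1 - 2 * α) - √(extremalDiscr α a h)) / (2 * α)

noncomputable def extremalHigh (α a h : ℝ) : ℝ :=
  (a + h * (1 - 2 * α) + √(extremalDiscr α a h)) / (2 * (1 - α))

section Extremal

variable {α a h : ℝ}

lemma sq_mul_sub_le_extremalDiscr (hα : 0 ≤ α) (hα1 : α ≤ 1) (hh : 0 ≤ h) (hha : h ≤ a) :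
    ((1 - 2 * α) * (a - h)) ^ 2 ≤ extremalDiscr α a h := by
  have hsq : (1 - 2 * α) ^ 2 ≤ 1 := by nlinarith
  unfold extremalDiscr
  nlinarith [mul_nonneg (sub_nonneg.2 hha) (mul_nonneg (hh.trans hha) (sub_nonneg.2 hsq))]

lemma mul_sub_le_sqrt_extremalDiscr (hα : 0 ≤ α) (hα1 : α ≤ 1) (hh : 0 ≤ h) (hha : h ≤ a) :
    (1 - 2 * α) * (a - h) ≤ √(extremalDiscr α a h) :=
  (le_abs_self _).trans (abs_le_sqrt (sq_mul_sub_le_extremalDiscr hα hα1 hh hha))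

lemma sqrt_extremalDiscr_lt (hα : 0 < α) (hh : 0 < h) (hha : h ≤ a) :
    √(extremalDiscr α a h) < a - h * (1 - 2 * α) := by
  have hu : 0 < a - h * (1 - 2 * α) := by nlinarith
  rw [sqrt_lt' hu]
  unfold extremalDiscr
  nlinarith [mul_pos (mul_pos hα hα) (mul_pos (hh.trans_le hha) hh)]

lemma extremalLow_pos (hα : 0 < α) (hh : 0 < h) (hha : h ≤ a) : 0 < extremalLow α a h :=
  div_pos (sub_pos.2 (sqrt_extremalDiscr_lt hα hh hha)) (by positivity)

lemma extremalLow_le (hα : 0 < α) (hα1 : α ≤ 1) (hh : 0 < h) (hha : h ≤ a) :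
    extremalLow α a h ≤ a := by
  rw [extremalLow, div_le_iff₀ (by positivity)]
  linarith [mul_sub_le_sqrt_extremalDiscr hα.le hα1 hh.le hha]

lemma le_extremalHigh (hα : 0 < α) (hα1 : α < 1) (hh : 0 < h) (hha : h ≤ a) :
    a ≤ extremalHigh α a h := by
  rw [extremalHigh, le_div_iff₀ (by linarith)]
  linarith [mul_sub_le_sqrt_extremalDiscr hα.le hα1.le hh.le hha]

lemma two_mul_mul_extremalLow (hα : 0 < α) :
    2 * α * extremalLow α a h = a - h * (1 - 2 * α) - √(extremalDiscr α a h) := by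
  rw [extremalLow]
  field_simp

lemma extremalLow_quadratic (hα : 0 < α) (hα1 : α ≤ 1) (hh : 0 < h) (hha : h ≤ a) :
    α * extremalLow α a h ^ 2 - (a - h * (1 - 2 * α)) * extremalLow α a h + α * a * h = 0 := by
  have hD : √(extremalDiscr α a h) ^ 2 = extremalDiscr α a h :=
    sq_sqrt ((sq_nonneg _).trans (sq_mul_sub_le_extremalDiscr hα.le hα1 hh.le hha))
  have h2P := two_mul_mul_extremalLow (a := a) (h := h) hα
  set D := √(extremalDiscr α a h)
  set P := extremalLow α a h
  rw [extremalDiscr] at hD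
  have h4 : 4 * α * (α * P ^ 2 - (a - h * (1 - 2 * α)) * P + α * a * h) = 0 := by
    linear_combination (2 * α * P - (a - h * (1 - 2 * α)) - D) * h2P + hD
  exact (mul_eq_zero.1 h4).resolve_left (by positivity)

lemma extremalLow_le_of_quadratic_nonpos (hα : 0 < α) (hα1 : α ≤ 1) (hh : 0 < h)
    (hha : h ≤ a) {x : ℝ} (hx : α * x ^ 2 - (a - h * (1 - 2 * α)) * x + α * a * h ≤ 0) :
    extremalLow α a h ≤ x := by
  have hP := extremalLow_quadratic hα hα1 hh hha
  have h2P := two_mul_mul_extremalLow (a := a) (h := h) hα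
  by_contra! hxP
  nlinarith [sqrt_nonneg (extremalDiscr α a h), mul_pos (sub_pos.2 hxP) hα]

lemma extremal_weighted_sum (hα : 0 < α) (hα1 : α < 1) :
    α * extremalLow α a h + (1 - α) * extremalHigh α a h = a := by
  have : 1 - α ≠ 0 := by linarith
  rw [extremalLow, extremalHigh]
  field_simp
  ring

lemma extremal_weighted_inv_sum (hα : 0 < α) (hα1 : α < 1) (hh : 0 < h) (hha : h ≤ a) :
    α / extremalLow α a h + (1 - α) / extremalHigh α a h = 1 / h := by
  have hsum := extremal_weighted_sum (a := a) (h := h) hα hα1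
  have hquad := extremalLow_quadratic hα hα1.le hh hha
  have hP := extremalLow_pos hα hh hha
  have hQ := hh.trans_le (hha.trans (le_extremalHigh hα hα1 hh hha))
  set P := extremalLow α a h
  set Q := extremalHigh α a h
  rw [div_add_div _ _ hP.ne' hQ.ne', div_eq_div_iff (by positivity) hh.ne']
  have h1 : (1 - α) * ((α * Q + P * (1 - α)) * h - 1 * (P * Q)) = 0 := by
    linear_combination (α * h - P) * hsum + hquad
  exact sub_eq_zero.1 ((mul_eq_zero.1 h1).resolve_left (by linarith))

lemma extremal_sum_eq {n : ℝ} (hn : 1 < n) :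
    n * a = extremalLow (1 / n) a h + (n - 1) * extremalHigh (1 / n) a h := by
  have hw := extremal_weighted_sum (a := a) (h := h) (one_div_pos.2 (by linarith))
    ((div_lt_one (by linarith)).2 hn)
  conv_lhs => rw [← hw]
  field_simp

lemma extremal_inv_sum_eq {n : ℝ} (hn : 1 < n) (hh : 0 < h) (hha : h ≤ a) :
    n / h = (extremalLow (1 / n) a h)⁻¹ + (n - 1) * (extremalHigh (1 / n) a h)⁻¹ := by
  have hw := extremal_weighted_inv_sum (one_div_pos.2 (by linarith))
    ((div_lt_one (by linarith)).2 hn) hh hha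
  conv_lhs => rw [← mul_one_div n h, ← hw]
  field_simp

end Extremal

section Sums

variable {ι : Type*} {s : Finset ι} {x : ι → ℝ}

lemma sq_card_le_sum_mul_sum_inv (hx : ∀ i ∈ s, 0 < x i) :
    (#s : ℝ) ^ 2 ≤ (∑ i ∈ s, x i) * ∑ i ∈ s, (x i)⁻¹ := by
  simpa using sum_sq_le_sum_mul_sum_of_sq_le_mul s (r := 1) (fun i hi ↦ (hx i hi).le)
    (fun i hi ↦ (inv_pos.2 (hx i hi)).le) (fun i hi ↦ by simp [(hx i hi).ne'])

lemma sq_card_sub_one_le_sum_erase_mul (hx : ∀ i ∈ s, 0 < x i) {i : ι} (hi : i ∈ s) :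
    ((#s : ℝ) - 1) ^ 2 ≤ (∑ j ∈ s, x j - x i) * (∑ j ∈ s, (x j)⁻¹ - (x i)⁻¹) := by
  classical
  have h := sq_card_le_sum_mul_sum_inv (s := s.erase i) fun j hj ↦ hx j (mem_of_mem_erase hj)
  rwa [card_erase_of_mem hi, Nat.cast_sub (card_pos.2 ⟨i, hi⟩), Nat.cast_one,
    sum_erase_eq_sub hi, sum_erase_eq_sub hi] at h

lemma card_div_sum_inv_le_sum_div_card (hs : s.Nonempty) (hx : ∀ i ∈ s, 0 < x i) :
    #s / ∑ i ∈ s, (x i)⁻¹ ≤ (∑ i ∈ s, x i) / #s := by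
  have hρ : 0 < ∑ i ∈ s, (x i)⁻¹ := sum_pos (fun i hi ↦ inv_pos.2 (hx i hi)) hs
  rw [div_le_div_iff₀ hρ (by simpa using hs.card_pos)]
  nlinarith [sq_card_le_sum_mul_sum_inv hx]

lemma extremalLow_le_of_mem (hx : ∀ i ∈ s, 0 < x i) {i : ι} (hi : i ∈ s) :
    extremalLow (1 / #s) ((∑ j ∈ s, x j) / #s) (#s / ∑ j ∈ s, (x j)⁻¹) ≤ x i := by
  have hs : s.Nonempty := ⟨i, hi⟩
  have hn : (1 : ℝ) ≤ #s := by exact_mod_cast hs.card_pos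
  have hρ : 0 < ∑ j ∈ s, (x j)⁻¹ := sum_pos (fun j hj ↦ inv_pos.2 (hx j hj)) hs
  have hxi := hx i hi
  have hcs := mul_le_mul_of_nonneg_right (sq_card_sub_one_le_sum_erase_mul hx hi) hxi.le
  rw [mul_assoc _ _ (x i), sub_mul _ (x i)⁻¹, inv_mul_cancel₀ hxi.ne'] at hcs
  refine extremalLow_le_of_quadratic_nonpos (by positivity) (div_le_one_of_le₀ hn (by positivity))
    (by positivity) (card_div_sum_inv_le_sum_div_card hs hx) ?_
  set n : ℝ := (#s : ℝ)
  set σ := ∑ j ∈ s, x j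
  set ρ := ∑ j ∈ s, (x j)⁻¹
  rw [show 1 / n * x i ^ 2 - (σ / n - n / ρ * (1 - 2 * (1 / n))) * x i + 1 / n * (σ / n) * (n / ρ)
      = (ρ * x i ^ 2 - (σ * ρ - n * (n - 2)) * x i + σ) / (n * ρ) by field_simp]
  refine div_nonpos_of_nonpos_of_nonneg ?_ (by positivity)
  nlinarith

lemma prod_rpow_le_of_sum_log_le (hs : s.Nonempty) (hx : ∀ i ∈ s, 0 < x i) {p q : ℝ}
    (hp : 0 < p) (hq : 0 < q) (hlog : ∑ i ∈ s, log (x i) ≤ log p + (#s - 1) * log q) :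
    (∏ i ∈ s, x i) ^ (1 / #s : ℝ) ≤ p ^ (1 / #s : ℝ) * q ^ (1 - 1 / #s : ℝ) := by
  have hn : (0 : ℝ) < #s := by exact_mod_cast hs.card_pos
  have hprod : 0 < ∏ i ∈ s, x i := prod_pos hx
  rw [← log_le_log_iff (by positivity) (by positivity), log_rpow hprod,
    log_prod fun i hi ↦ (hx i hi).ne', log_mul (by positivity) (by positivity), log_rpow hp,
    log_rpow hq, show 1 - 1 / (#s : ℝ) = 1 / #s * (#s - 1) by field_simp]
  nlinarith [mul_le_mul_of_nonneg_left hlog (one_div_pos.2 hn).le]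

end Sums

/-- A sharpened harmonic–geometric–arithmetic mean inequality: for positive
reals `x_1, …, x_n` (`n ≥ 2`) with arithmetic mean `a`, geometric mean `g`,
harmonic mean `h`, and `α = 1/n`, one has
`g ≤ ((a − h(1−2α) − √((a−h)(a−h(1−2α)²)))/(2α))^α ·
     ((a + h(1−2α) + √((a−h)(a−h(1−2α)²)))/(2(1−α)))^(1−α)`. -/
theorem stmt_11 (n : ℕ) (hn : 2 ≤ n) (x : Fin n → ℝ) (hx : ∀ i, 0 < x i)
    (a g h α : ℝ)
    (ha : a = (∑ i, x i) / n)
    (hg : g = (∏ i, x i) ^ ((1 : ℝ) / n))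
    (hh : h = n / (∑ i, 1 / x i))
    (hα : α = 1 / n) :
    g ≤ ((a - h * (1 - 2 * α) -
            Real.sqrt ((a - h) * (a - h * (1 - 2 * α) ^ 2))) / (2 * α)) ^ α *
        ((a + h * (1 - 2 * α) +
            Real.sqrt ((a - h) * (a - h * (1 - 2 * α) ^ 2))) / (2 * (1 - α)))
          ^ (1 - α) := by
  have hn1 : (1 : ℝ) < n := by exact_mod_cast hn
  have hne : (univ : Finset (Fin n)).Nonempty := ⟨⟨0, by omega⟩, mem_univ _⟩
  have hx' : ∀ i ∈ univ, 0 < x i := fun i _ ↦ hx i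
  have hcard : (#(univ : Finset (Fin n)) : ℝ) = n := by simp
  simp only [one_div (x _)] at hh
  subst hg hα
  change _ ≤ extremalLow _ a h ^ _ * extremalHigh _ a h ^ _
  have hh0 : 0 < h := hh ▸ div_pos (by linarith) (sum_pos (fun i _ ↦ inv_pos.2 (hx i)) hne)
  have hha : h ≤ a := by
    rw [ha, hh, ← hcard]; exact card_div_sum_inv_le_sum_div_card hne hx'
  have hα0 : (0 : ℝ) < 1 / n := by positivity
  have hα1 : 1 / (n : ℝ) < 1 := (div_lt_one (by linarith)).2 hn1
  have hP := extremalLow_pos hα0 hh0 hha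
  have hPQ := (extremalLow_le hα0 hα1.le hh0 hha).trans (le_extremalHigh hα0 hα1 hh0 hha)
  have hxP : ∀ i ∈ univ, extremalLow (1 / n) a h ≤ x i := fun i hi ↦ by
    simpa only [hcard, ← ha, ← hh] using extremalLow_le_of_mem hx' hi
  have hlog := sum_log_le_of_sum_eq univ x hP hPQ hxP
    (by rw [hcard, ← extremal_sum_eq hn1, ha]; field_simp)
    (by rw [hcard, ← extremal_inv_sum_eq hn1 hh0 hha, hh]; field_simp)
  simpa only [hcard] using prod_rpow_le_of_sum_log_le hne hx' hP (hP.trans_le hPQ) hlog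
end

section
/- Let n ≥ 2 and let λ_1, …, λ_n be positive real numbers with Σ_{i=1}^n λ_i = n. Set S = Σ_{i=1}^n 1/λ_i. Then ∏_{i=1}^n (1/λ_i) ≤ e · ((S + 1 − 2/n)/n)^{n−1}, and consequently ∏_{i=1}^n (1/λ_i) ≤ e · ((S + 1)/n)^{n−1}. -/
/-!
Some `λ_j` is at least `1`, since the `λ_i` average to `1`; dropping the factor `1/λ_j ≤ 1` and
applying AM–GM to the remaining `n - 1` factors bounds the product by `(S/(n-1))^(n-1)`. Finally
`(n/(n-1))^(n-1) = (1 + 1/(n-1))^(n-1) ≤ e` turns this into `e · (S/n)^(n-1)`, and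
`S/n ≤ (S + 1 - 2/n)/n` because `n ≥ 2`.
-/

open Finset Real

theorem Real.prod_le_mean_pow_card {ι : Type*} (s : Finset ι) (z : ι → ℝ)
    (hz : ∀ i ∈ s, 0 ≤ z i) : ∏ i ∈ s, z i ≤ ((∑ i ∈ s, z i) / #s) ^ #s := by
  rcases s.eq_empty_or_nonempty with rfl | hs
  · simp
  have hcard : (0 : ℝ) < #s := by exact_mod_cast hs.card_pos
  have amgm := geom_mean_le_arith_mean s (fun _ ↦ 1) z (fun _ _ ↦ zero_le_one)
    (by simpa using hs.card_pos) hz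
  simp only [rpow_one, one_mul, sum_const, nsmul_eq_mul, mul_one] at amgm
  rwa [rpow_inv_le_iff_of_pos (prod_nonneg hz) (div_nonneg (sum_nonneg hz) hcard.le) hcard,
    rpow_natCast] at amgm

theorem Real.div_pow_le_exp_one_mul_div_succ_pow {x : ℝ} (hx : 0 ≤ x) (m : ℕ) :
    (x / m) ^ m ≤ exp 1 * (x / (m + 1)) ^ m := by
  rcases m.eq_zero_or_pos with rfl | hm
  · simp
  have hsplit : x / m = (1 + (m : ℝ)⁻¹) * (x / (m + 1)) := by field_simp
  rw [hsplit, mul_pow]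
  gcongr
  exact one_add_inv_pow_le_exp

theorem prod_one_div_le_exp_one_mul_mean_pow {ι : Type*} [Fintype ι] [Nonempty ι]
    (lam : ι → ℝ) (hpos : ∀ i, 0 < lam i) (hsum : ∑ i, lam i = Fintype.card ι) :
    ∏ i, 1 / lam i ≤
      exp 1 * ((∑ i, 1 / lam i) / Fintype.card ι) ^ (Fintype.card ι - 1) := by
  classical
  obtain ⟨j, -, hj⟩ :=
    exists_le_of_sum_le univ_nonempty (f := fun _ ↦ (1 : ℝ)) (g := lam) (by simp [hsum])
  have hinv_nonneg : ∀ i, 0 ≤ 1 / lam i := fun i ↦ (one_div_pos.2 (hpos i)).le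
  have hcard : #(univ.erase j) = Fintype.card ι - 1 := by
    rw [card_erase_of_mem (mem_univ j), card_univ]
  have hcard_cast : (Fintype.card ι : ℝ) = ↑(Fintype.card ι - 1) + 1 := by
    rw [Nat.cast_pred Fintype.card_pos, sub_add_cancel]
  calc ∏ i, 1 / lam i = 1 / lam j * ∏ i ∈ univ.erase j, 1 / lam i :=
        (mul_prod_erase _ _ (mem_univ j)).symm
    _ ≤ ∏ i ∈ univ.erase j, 1 / lam i :=
        mul_le_of_le_one_left (prod_nonneg fun i _ ↦ hinv_nonneg i) ((div_le_one (hpos j)).2 hj)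
    _ ≤ ((∑ i ∈ univ.erase j, 1 / lam i) / #(univ.erase j)) ^ #(univ.erase j) :=
        prod_le_mean_pow_card _ _ fun i _ ↦ hinv_nonneg i
    _ ≤ ((∑ i, 1 / lam i) / ↑(Fintype.card ι - 1)) ^ (Fintype.card ι - 1) := by
        rw [hcard]
        gcongr
        · exact div_nonneg (sum_nonneg fun i _ ↦ hinv_nonneg i) (Nat.cast_nonneg _)
        · exact fun i _ _ ↦ hinv_nonneg i
        · exact subset_univ _
    _ ≤ exp 1 * ((∑ i, 1 / lam i) / Fintype.card ι) ^ (Fintype.card ι - 1) := by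
        rw [hcard_cast]
        exact div_pow_le_exp_one_mul_div_succ_pow (sum_nonneg fun i _ ↦ hinv_nonneg i) _

/-- If `λ_1, …, λ_n > 0` (`n ≥ 2`) with `∑ λ_i = n`, and `S = ∑ 1/λ_i`, then
`∏ 1/λ_i ≤ e · ((S + 1 − 2/n)/n)^(n−1)`, and consequently
`∏ 1/λ_i ≤ e · ((S + 1)/n)^(n−1)`. -/
theorem stmt_12 (n : ℕ) (hn : 2 ≤ n) (lam : Fin n → ℝ)
    (hpos : ∀ i, 0 < lam i) (hsum : ∑ i, lam i = n)
    (S : ℝ) (hS : S = ∑ i, 1 / lam i) :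
    (∏ i, 1 / lam i) ≤ Real.exp 1 * ((S + 1 - 2 / n) / n) ^ (n - 1) ∧
    (∏ i, 1 / lam i) ≤ Real.exp 1 * ((S + 1) / n) ^ (n - 1) := by
  have : Nonempty (Fin n) := ⟨⟨0, by omega⟩⟩
  have hn_pos : (0 : ℝ) < n := by positivity
  have htwo_div : 2 / (n : ℝ) ≤ 1 := (div_le_one hn_pos).2 (by exact_mod_cast hn)
  have hS_nonneg : 0 ≤ S := hS ▸ sum_nonneg fun i _ ↦ (one_div_pos.2 (hpos i)).le
  have hbound := prod_one_div_le_exp_one_mul_mean_pow lam hpos (by simpa using hsum)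
  rw [Fintype.card_fin, ← hS] at hbound
  refine ⟨hbound.trans ?_, hbound.trans ?_⟩ <;> gcongr <;> linarith
end

section
/- Let n ≥ 2 and let B be an invertible n×n real matrix with rows b_1, …, b_n, regarded as a basis of the lattice L with volume Vol L = |det B|. Then ∏_{i=1}^n ‖b_i‖ ≤ e^{1/2} · ((S(B) + 1)/n)^{(n−1)/2} · Vol L. -/
open Finset Real InnerProductSpace Module

theorem prod_le_rpow_sum_sq_div_card {ι : Type*} {s : Finset ι} (hs : s.Nonempty) {x : ι → ℝ}
    (hx : ∀ i ∈ s, 0 ≤ x i) :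
    ∏ i ∈ s, x i ≤ ((∑ i ∈ s, x i ^ 2) / #s) ^ ((#s : ℝ) / 2) := by
  have hcard : (0 : ℝ) < #s := by exact_mod_cast hs.card_pos
  have amgm := geom_mean_le_arith_mean s (fun _ => 1) (fun i => x i ^ 2)
    (fun _ _ => zero_le_one) (by simpa using hcard) (fun i _ => sq_nonneg (x i))
  simp only [rpow_one, one_mul, sum_const, nsmul_eq_mul, mul_one] at amgm
  have hprod : 0 ≤ ∏ i ∈ s, x i ^ 2 := prod_nonneg fun i _ => sq_nonneg (x i)
  calc ∏ i ∈ s, x i = ((∏ i ∈ s, x i ^ 2) ^ (#s : ℝ)⁻¹) ^ ((#s : ℝ) / 2) := by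
        rw [← rpow_mul hprod, inv_mul_eq_div, div_div_cancel_left' hcard.ne', prod_pow, ← one_div,
          ← sqrt_eq_rpow, sqrt_sq (prod_nonneg hx)]
    _ ≤ _ := rpow_le_rpow (by positivity) amgm (by positivity)

theorem rpow_div_le_exp_half_mul_rpow_div_add_one {m T : ℝ} (hm : 0 < m) (hT : 0 ≤ T) :
    (T / m) ^ (m / 2) ≤ exp (1 / 2) * (T / (m + 1)) ^ (m / 2) := by
  calc (T / m) ^ (m / 2) = (1 + 1 / m) ^ (m / 2) * (T / (m + 1)) ^ (m / 2) := by
        rw [← mul_rpow (by positivity) (by positivity)]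
        congr 1
        field_simp
    _ ≤ exp (1 / m) ^ (m / 2) * (T / (m + 1)) ^ (m / 2) := by
        gcongr
        linarith [add_one_le_exp (1 / m)]
    _ = exp (1 / 2) * (T / (m + 1)) ^ (m / 2) := by
        rw [← exp_mul]
        congr 2
        field_simp

theorem prod_le_exp_half_mul_rpow {ι : Type*} [Fintype ι] [DecidableEq ι] {ρ : ι → ℝ} {T : ℝ}
    (hcard : 2 ≤ Fintype.card ι) (hρ : ∀ i, 0 ≤ ρ i) {i₀ : ι} (hρ₀ : ρ i₀ = 1)
    (hsum : ∑ i, ρ i ^ 2 ≤ T) :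
    ∏ i, ρ i ≤ exp (1 / 2) * (T / Fintype.card ι) ^ (((Fintype.card ι : ℝ) - 1) / 2) := by
  set s := univ.erase i₀
  have hs : (#s : ℝ) = Fintype.card ι - 1 := by
    rw [card_erase_of_mem (mem_univ i₀), card_univ, Nat.cast_pred (by omega)]
  have hs_pos : (0 : ℝ) < #s := by
    rw [hs, sub_pos, Nat.one_lt_cast]
    omega
  have hsum_s : ∑ i ∈ s, ρ i ^ 2 ≤ T :=
    (sum_le_sum_of_subset_of_nonneg (erase_subset i₀ univ) fun i _ _ => sq_nonneg (ρ i)).trans hsum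
  calc ∏ i, ρ i = ∏ i ∈ s, ρ i := by rw [← mul_prod_erase univ ρ (mem_univ i₀), hρ₀, one_mul]
    _ ≤ ((∑ i ∈ s, ρ i ^ 2) / #s) ^ ((#s : ℝ) / 2) :=
        prod_le_rpow_sum_sq_div_card (card_pos.1 (by exact_mod_cast hs_pos)) fun i _ => hρ i
    _ ≤ (T / #s) ^ ((#s : ℝ) / 2) := by gcongr
    _ ≤ exp (1 / 2) * (T / (#s + 1)) ^ ((#s : ℝ) / 2) :=
        rpow_div_le_exp_half_mul_rpow_div_add_one hs_pos
          ((sum_nonneg fun i _ => sq_nonneg _).trans hsum_s)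
    _ = _ := by rw [hs, sub_add_cancel]

section GramSchmidt

variable {ι E : Type*} [LinearOrder ι] [LocallyFiniteOrderBot ι] [Fintype ι]
  [NormedAddCommGroup E] [InnerProductSpace ℝ E] [FiniteDimensional ℝ E]
  (h : finrank ℝ E = Fintype.card ι) (f : ι → E)

theorem abs_det_eq_prod_abs_inner_gramSchmidtOrthonormalBasis [DecidableEq ι]
    (b : OrthonormalBasis ι ℝ E) :
    |b.toBasis.det f| = ∏ i, |⟪gramSchmidtOrthonormalBasis h f i, f i⟫_ℝ| := by
  set e := gramSchmidtOrthonormalBasis h f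
  have hdet : b.toBasis.det f = b.toBasis.det e.toBasis * e.toBasis.det f :=
    congrArg (· f) (AlternatingMap.eq_smul_basis_det e.toBasis b.toBasis.det)
  rw [hdet, abs_mul, e.coe_toBasis, ← Real.norm_eq_abs, b.det_to_matrix_orthonormalBasis e,
    one_mul, gramSchmidtOrthonormalBasis_det, abs_prod]

theorem inner_mul_inner_gramSchmidtOrthonormalBasis_self (hf : LinearIndependent ℝ f)
    {i : ι} {v : E} (hv : ∀ j < i, ⟪v, f j⟫_ℝ = 0) :
    ⟪v, gramSchmidtOrthonormalBasis h f i⟫_ℝ * ⟪gramSchmidtOrthonormalBasis h f i, f i⟫_ℝ =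
      ⟪v, f i⟫_ℝ := by
  set e := gramSchmidtOrthonormalBasis h f
  rw [← e.sum_inner_mul_inner v (f i), sum_eq_single_of_mem i (mem_univ i)]
  intro j _ hji
  rcases hji.lt_or_gt with hji | hij
  · have hej : e j ∈ Submodule.span ℝ (f '' Set.Iic j) := by
      rw [gramSchmidtOrthonormalBasis_apply h ((gramSchmidtNormed_orthonormal hf).ne_zero j),
        gramSchmidtNormed]
      exact Submodule.smul_mem _ _ (gramSchmidt_mem_span ℝ f le_rfl)
    have hvj : e j ∈ (ℝ ∙ v)ᗮ := by
      refine Submodule.span_le.2 ?_ hej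
      rintro _ ⟨k, hkj, rfl⟩
      exact Submodule.mem_orthogonal_singleton_iff_inner_right.2 (hv k (hkj.trans_lt hji))
    rw [Submodule.mem_orthogonal_singleton_iff_inner_right.1 hvj, zero_mul]
  · rw [gramSchmidtOrthonormalBasis_inv_triangular h f hij, mul_zero]

theorem abs_inner_gramSchmidtOrthonormalBasis_of_isMin {i : ι} (hi : IsMin i) (hf : f i ≠ 0) :
    |⟪gramSchmidtOrthonormalBasis h f i, f i⟫_ℝ| = ‖f i‖ := by
  have hgs : gramSchmidt ℝ f i = f i := by
    rw [gramSchmidt_def, hi.finsetIio_eq, sum_empty, sub_zero]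
  have hne : gramSchmidtNormed ℝ f i ≠ 0 := by simpa [gramSchmidtNormed, hgs] using hf
  rw [gramSchmidtOrthonormalBasis_apply h hne, gramSchmidtNormed, hgs,
    real_inner_smul_left, real_inner_self_eq_norm_sq, sq, RCLike.ofReal_real_eq_id, id,
    inv_mul_cancel_left₀ (norm_ne_zero_iff.2 hf), abs_norm]

theorem one_le_norm_mul_abs_inner_gramSchmidtOrthonormalBasis (hf : LinearIndependent ℝ f)
    {i : ι} {v : E} (hv : ∀ j < i, ⟪v, f j⟫_ℝ = 0) (hvi : ⟪v, f i⟫_ℝ = 1) :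
    1 ≤ ‖v‖ * |⟪gramSchmidtOrthonormalBasis h f i, f i⟫_ℝ| := by
  set e := gramSchmidtOrthonormalBasis h f
  calc (1 : ℝ) = |⟪v, e i⟫_ℝ| * |⟪e i, f i⟫_ℝ| := by
        rw [← abs_mul, inner_mul_inner_gramSchmidtOrthonormalBasis_self h f hf hv, hvi, abs_one]
    _ ≤ ‖v‖ * |⟪e i, f i⟫_ℝ| := by
        gcongr
        simpa [e.orthonormal.1 i] using abs_real_inner_le_norm v (e i)

end GramSchmidt

theorem linearIndependent_of_inner_eq_ite {ι E : Type*} [DecidableEq ι] [NormedAddCommGroup E]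
    [InnerProductSpace ℝ E] {f g : ι → E} (hgf : ∀ i j, ⟪g i, f j⟫_ℝ = if j = i then 1 else 0) :
    LinearIndependent ℝ f := by
  refine linearIndependent_iff'.2 fun s c hs i hi => ?_
  have := congrArg (⟪g i, ·⟫_ℝ) hs
  simpa [inner_sum, real_inner_smul_right, hgf, hi] using this

theorem prod_norm_le_exp_half_mul_rpow_mul_abs_det {ι E : Type*} [LinearOrder ι]
    [LocallyFiniteOrderBot ι] [Fintype ι] [DecidableEq ι] [NormedAddCommGroup E]
    [InnerProductSpace ℝ E] [FiniteDimensional ℝ E] (b : OrthonormalBasis ι ℝ E)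
    (hcard : 2 ≤ Fintype.card ι) {f g : ι → E}
    (hgf : ∀ i j, ⟪g i, f j⟫_ℝ = if j = i then 1 else 0) :
    ∏ i, ‖f i‖ ≤ exp (1 / 2) *
      ((∑ i, (‖f i‖ * ‖g i‖) ^ 2 + 1) / Fintype.card ι) ^ (((Fintype.card ι : ℝ) - 1) / 2) *
        |b.toBasis.det f| := by
  have h : finrank ℝ E = Fintype.card ι := finrank_eq_card_basis b.toBasis
  have hf := linearIndependent_of_inner_eq_ite hgf
  -- `d i` is the length of the `i`-th Gram–Schmidt vector of `f`.
  set d : ι → ℝ := fun i => |⟪gramSchmidtOrthonormalBasis h f i, f i⟫_ℝ|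
  have hgd : ∀ i, 1 ≤ ‖g i‖ * d i := fun i =>
    one_le_norm_mul_abs_inner_gramSchmidtOrthonormalBasis h f hf
      (fun j hji => by rw [hgf, if_neg hji.ne]) (by rw [hgf, if_pos rfl])
  have hd : ∀ i, 0 < d i := fun i =>
    pos_of_mul_pos_right ((hgd i).trans_lt' one_pos) (norm_nonneg _)
  set ρ : ι → ℝ := fun i => ‖f i‖ / d i
  have hρ : ∀ i, ρ i ≤ ‖f i‖ * ‖g i‖ := fun i => by
    rw [div_le_iff₀ (hd i), mul_assoc]
    exact le_mul_of_one_le_right (norm_nonneg _) (hgd i)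
  have hprod : ∏ i, ‖f i‖ = (∏ i, ρ i) * |b.toBasis.det f| := by
    rw [abs_det_eq_prod_abs_inner_gramSchmidtOrthonormalBasis h, ← prod_mul_distrib]
    exact prod_congr rfl fun i _ => (div_mul_cancel₀ _ (hd i).ne').symm
  have : Nonempty ι := Fintype.card_pos_iff.1 (by omega)
  obtain ⟨i₀, hi₀⟩ : ∃ i₀ : ι, IsMin i₀ :=
    ⟨univ.min' univ_nonempty, fun j _ => min'_le _ _ (mem_univ j)⟩
  have hρ₀ : ρ i₀ = 1 := by
    have hd₀ : d i₀ = ‖f i₀‖ :=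
      abs_inner_gramSchmidtOrthonormalBasis_of_isMin h f hi₀ (hf.ne_zero i₀)
    show ‖f i₀‖ / d i₀ = 1
    rw [← hd₀, div_self (hd i₀).ne']
  rw [hprod]
  gcongr
  refine prod_le_exp_half_mul_rpow hcard (fun i => by positivity) hρ₀ ?_
  exact (sum_le_sum fun i _ => pow_le_pow_left₀ (by positivity) (hρ i) 2).trans
    (le_add_of_nonneg_right zero_le_one)

theorem norm_toLp_eq_sqrt {ι : Type*} [Fintype ι] (v : ι → ℝ) :
    ‖WithLp.toLp 2 v‖ = √(∑ j, v j ^ 2) := by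
  simp only [EuclideanSpace.norm_eq, Real.norm_eq_abs, sq_abs]

theorem det_basisFun_toLp {ι : Type*} [Fintype ι] [DecidableEq ι] (B : Matrix ι ι ℝ) :
    (EuclideanSpace.basisFun ι ℝ).toBasis.det (fun i => WithLp.toLp 2 (B i)) = B.det := by
  rw [EuclideanSpace.basisFun_toBasis, PiLp.basisFun_eq_pi_basisFun, Module.Basis.det_map,
    Pi.basisFun_det_apply]
  rfl

/-- For an invertible `B` (`n ≥ 2`, rows `b_i` a basis of a lattice of volume
`|det B|`), `∏ i, ‖b_i‖ ≤ e^(1/2) · ((S(B)+1)/n)^((n−1)/2) · |det B|`. -/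
theorem stmt_13 (n : ℕ) (hn : 2 ≤ n) (B : Matrix (Fin n) (Fin n) ℝ)
    (hB : IsUnit B.det) :
    ∏ i, Real.sqrt (∑ j, (B i j) ^ 2) ≤
      Real.exp (1 / 2) * ((seysen B + 1) / n) ^ (((n : ℝ) - 1) / 2) *
        |B.det| := by
  have hgf : ∀ i j, ⟪WithLp.toLp 2 (fun k => B⁻¹ k i), WithLp.toLp 2 (B j)⟫_ℝ =
      if j = i then 1 else 0 := by
    intro i j
    rw [EuclideanSpace.inner_eq_star_dotProduct, star_trivial, ← Matrix.mul_apply',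
      Matrix.mul_nonsing_inv B hB, Matrix.one_apply]
  have key := prod_norm_le_exp_half_mul_rpow_mul_abs_det (EuclideanSpace.basisFun (Fin n) ℝ)
    (by simpa using hn) hgf
  simp (disch := positivity) only [norm_toLp_eq_sqrt, mul_pow, Real.sq_sqrt, det_basisFun_toLp,
    Fintype.card_fin] at key
  rwa [seysen]
end
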